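/- (AdaHedge main regret bound) For losses in [0,1]^K, AdaHedge's regret satisfies R_T ≤ 2·√(L*_T·(T - L*_T)/T · ln K) + (16/3)·ln K + 2. -/

import Mathlib

open Finset

noncomputable section

/-- Cumulative losses: `L t k = ∑_{s < t} ℓ s k` (so `L 0 = 0`). -/
def cumLoss {K : ℕ} (ℓ : ℕ → Fin K → ℝ) (t : ℕ) (k : Fin K) : ℝ :=
  ∑ s ∈ Finset.range t, ℓ s k

/-- `L* = min_k L k`. -/
def bestLoss {K : ℕ} [NeZero K] (L : Fin K → ℝ) : ℝ :=
  Finset.univ.inf' ⟨⟨0, Nat.pos_of_ne_zero (NeZero.ne K)⟩, Finset.mem_univ _⟩ L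

/-- The set of current leaders. -/
def leaders {K : ℕ} [NeZero K] (L : Fin K → ℝ) : Finset (Fin K) :=
  Finset.univ.filter fun k => L k = bestLoss L

/-- Hedge weights at round `t` (rounds indexed `0,…,T-1`), given the cumulative mixability
gap `D = Δ_{t-1}` accrued so far, i.e. with learning rate `η_t = ln K / D`; the case
`D = 0` corresponds to `η_t = ∞`, giving uniform weights on the current leaders (FTL). -/
def wts {K : ℕ} [NeZero K] (ℓ : ℕ → Fin K → ℝ) (t : ℕ) (D : ℝ) (k : Fin K) : ℝ :=
  if D = 0 then
    (if k ∈ leaders (cumLoss ℓ t) then ((leaders (cumLoss ℓ t)).card : ℝ)⁻¹ else 0)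
  else
    Real.exp (-(Real.log K / D) * cumLoss ℓ t k) /
      ∑ j, Real.exp (-(Real.log K / D) * cumLoss ℓ t j)

/-- Hedge loss `h_t = w_t · ℓ_t`. -/
def hloss {K : ℕ} [NeZero K] (ℓ : ℕ → Fin K → ℝ) (t : ℕ) (D : ℝ) : ℝ :=
  ∑ k, wts ℓ t D k * ℓ t k

/-- Cumulative mix loss of Hedge with constant rate `η` and uniform prior. -/
def Mconst {K : ℕ} (ℓ : ℕ → Fin K → ℝ) (η : ℝ) (t : ℕ) : ℝ :=
  -(1/η) * Real.log ((1 / (K : ℝ)) * ∑ k, Real.exp (-η * cumLoss ℓ t k))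

/-- Per-round mix loss `m_t = -(1/η_t)·ln(∑ₖ w_{t,k} e^{-η_t ℓ_{t,k}})` at rate
`η_t = ln K / D`, written in telescoped form; for `D = 0` (i.e. `η_t = ∞`) it equals
`L*_t - L*_{t-1}`. -/
def mloss {K : ℕ} [NeZero K] (ℓ : ℕ → Fin K → ℝ) (t : ℕ) (D : ℝ) : ℝ :=
  if D = 0 then bestLoss (cumLoss ℓ (t+1)) - bestLoss (cumLoss ℓ t)
  else Mconst ℓ (Real.log K / D) (t+1) - Mconst ℓ (Real.log K / D) t

/-- Mixability gap `δ_t = h_t - m_t`. -/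
def mixGap {K : ℕ} [NeZero K] (ℓ : ℕ → Fin K → ℝ) (t : ℕ) (D : ℝ) : ℝ :=
  hloss ℓ t D - mloss ℓ t D

/-- AdaHedge's cumulative mixability gap `Δ_t`, defined recursively: `Δ_0 = 0` and
`Δ_{t+1} = Δ_t + δ_{t+1}`, where round `t+1` uses learning rate `η = ln K / Δ_t`
(interpreted as `∞` when `Δ_t = 0`). -/
def ahDelta {K : ℕ} [NeZero K] (ℓ : ℕ → Fin K → ℝ) : ℕ → ℝ
  | 0 => 0
  | (t+1) => ahDelta ℓ t + mixGap ℓ t (ahDelta ℓ t)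

/-- Loss variance `v_t = ∑ₖ w_{t,k}(ℓ_{t,k} - h_t)²`. -/
def vvar {K : ℕ} [NeZero K] (ℓ : ℕ → Fin K → ℝ) (t : ℕ) (D : ℝ) : ℝ :=
  ∑ k, wts ℓ t D k * (ℓ t k - hloss ℓ t D)^2



section Helpers

lemma mono_aux (f f' : ℝ → ℝ) (hd : ∀ x, HasDerivAt f (f' x) x)
    (h0 : ∀ x, 0 < x → 0 ≤ f' x) : MonotoneOn f (Set.Ici 0) := by
  apply monotoneOn_of_deriv_nonneg (convex_Ici 0)
    (Differentiable.continuous fun x => (hd x).differentiableAt).continuousOn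
    (fun x _ => (hd x).differentiableAt.differentiableWithinAt)
  intro x hx
  rw [interior_Ici] at hx
  rw [(hd x).deriv]
  exact h0 x hx

lemma phi_nonneg (x : ℝ) : 0 ≤ Real.exp x - x - 1 := by
  have := Real.add_one_le_exp x; linarith

/-- quadratic lower bound for exp on nonneg reals -/
lemma exp_quad_lb {t : ℝ} (ht : 0 ≤ t) : 1 + t + t^2/2 ≤ Real.exp t := by
  have key := mono_aux (fun x => Real.exp x - 1 - x - x^2/2)
      (fun x => Real.exp x - 1 - x) ?_ ?_ Set.self_mem_Ici ht ht
  · simp at key; nlinarith [key]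
  · intro x
    have h1 : HasDerivAt (fun x : ℝ => Real.exp x) (Real.exp x) x := Real.hasDerivAt_exp x
    have h2 : HasDerivAt (fun x : ℝ => x^2/2) x x := by
      have := (hasDerivAt_pow 2 x).div_const 2
      simpa using this
    exact (((h1.sub_const 1).sub (hasDerivAt_id x)).sub h2)
  · intro x _
    have := Real.add_one_le_exp x; linarith

/-- quadratic upper bound for exp on nonpos reals -/
lemma exp_quad_ub {t : ℝ} (ht : t ≤ 0) : Real.exp t ≤ 1 + t + t^2/2 := by
  have key := mono_aux (fun x => 1 + (-x) + x^2/2 - Real.exp (-x))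
      (fun x => -1 + x + Real.exp (-x)) ?_ ?_ Set.self_mem_Ici (by linarith : (0:ℝ) ≤ -t) (by linarith)
  · simp at key; nlinarith [key]
  · intro x
    have h1 : HasDerivAt (fun x : ℝ => Real.exp (-x)) (-Real.exp (-x)) x := by
      simpa [Function.comp_def] using (Real.hasDerivAt_exp (-x)).comp x (hasDerivAt_neg x)
    have h2 : HasDerivAt (fun x : ℝ => x^2/2) x x := by
      simpa using (hasDerivAt_pow 2 x).div_const 2
    have := (((hasDerivAt_const x (1:ℝ)).add (hasDerivAt_neg x)).add h2).sub h1
    exact this.congr_deriv (by ring)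
  · intro x hx
    have := Real.add_one_le_exp (-x); nlinarith [Real.exp_pos (-x)]

/-- `φ(st) ≤ s² φ(t)` for `|s| ≤ 1`, `t ≥ 0`, where `φ(x) = eˣ - x - 1`. -/
lemma phi_mul {s t : ℝ} (hs : |s| ≤ 1) (ht : 0 ≤ t) :
    Real.exp (s*t) - s*t - 1 ≤ s^2 * (Real.exp t - t - 1) := by
  obtain ⟨hs1, hs2⟩ := abs_le.mp hs
  rcases le_or_gt 0 s with hs0 | hs0
  · have key := mono_aux (fun x => s^2*(Real.exp x - x - 1) - (Real.exp (s*x) - s*x - 1))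
        (fun x => s^2*(Real.exp x - 1) - (s*Real.exp (s*x) - s)) ?_ ?_
        Set.self_mem_Ici ht ht
    · simp at key; nlinarith [key]
    · intro x
      have h1 : HasDerivAt (fun x : ℝ => Real.exp x - x - 1) (Real.exp x - 1) x := by
        simpa using ((Real.hasDerivAt_exp x).sub (hasDerivAt_id x)).sub_const 1
      have h2 : HasDerivAt (fun x : ℝ => Real.exp (s*x)) (s*Real.exp (s*x)) x := by
        have := (Real.hasDerivAt_exp (s*x)).comp x ((hasDerivAt_id x).const_mul s)
        simpa [mul_comm, Function.comp_def] using this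
      have h3 : HasDerivAt (fun x : ℝ => Real.exp (s*x) - s*x - 1) (s*Real.exp (s*x) - s) x := by
        simpa using (h2.sub ((hasDerivAt_id x).const_mul s)).sub_const 1
      exact (h1.const_mul (s^2)).sub h3
    · intro x hx
      have hint : Real.exp (s*x) ≤ s * Real.exp x + (1 - s) := by
        have h := convexOn_exp.2 (Set.mem_univ x) (Set.mem_univ (0:ℝ))
          hs0 (by linarith : (0:ℝ) ≤ 1 - s) (by ring)
        simpa [smul_eq_mul] using h
      nlinarith [Real.exp_pos x]
  · have h1 : Real.exp (s*t) ≤ 1 + s*t + (s*t)^2/2 :=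
      exp_quad_ub (mul_nonpos_of_nonpos_of_nonneg hs0.le ht)
    have h2 : 1 + t + t^2/2 ≤ Real.exp t := exp_quad_lb ht
    nlinarith [sq_nonneg t, sq_nonneg s, sq_nonneg (s*t), mul_nonneg (mul_nonneg (sq_nonneg s) ht) ht]

/-- `(1 - η/3) φ(η) ≤ η²/2` for `η ≥ 0`. -/
lemma eta_ineq {η : ℝ} (hη : 0 ≤ η) :
    (1 - η/3) * (Real.exp η - η - 1) ≤ η^2/2 := by
  -- q'(x) = 1 + (x-1)eˣ ≥ 0 on [0,∞)
  have hq' : ∀ x : ℝ, 0 ≤ x → 0 ≤ 1 + (x-1)*Real.exp x := by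
    intro x hx
    have key := mono_aux (fun y => 1 + (y-1)*Real.exp y) (fun y => y*Real.exp y) ?_ ?_
      Set.self_mem_Ici hx hx
    · simp at key; linarith [key]
    · intro y
      have := ((hasDerivAt_id y).sub_const 1).mul (Real.hasDerivAt_exp y)
      have h2 := this.const_add (1:ℝ)
      exact h2.congr_deriv (by simp only [id_eq]; ring)
    · intro y hy; positivity
  -- q(x) = x + 2 + (x-2)eˣ ≥ 0 on [0,∞)
  have hq : ∀ x : ℝ, 0 ≤ x → 0 ≤ x + 2 + (x-2)*Real.exp x := by
    intro x hx
    have key := mono_aux (fun y => y + 2 + (y-2)*Real.exp y)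
        (fun y => 1 + (y-1)*Real.exp y) ?_ ?_ Set.self_mem_Ici hx hx
    · simp at key; linarith [key]
    · intro y
      have h1 := ((hasDerivAt_id y).sub_const 2).mul (Real.hasDerivAt_exp y)
      have h2 := (((hasDerivAt_id y).add_const 2).add h1)
      exact h2.congr_deriv (by simp only [id_eq]; ring)
    · intro y hy; exact hq' y hy.le
  have key := mono_aux (fun y => y^2/2 - (1 - y/3)*(Real.exp y - y - 1))
      (fun y => (y + 2 + (y-2)*Real.exp y)/3) ?_ ?_ Set.self_mem_Ici hη hη
  · simp at key; nlinarith [key]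
  · intro y
    have h1 : HasDerivAt (fun y : ℝ => y^2/2) y y := by
      simpa using (hasDerivAt_pow 2 y).div_const 2
    have h2 : HasDerivAt (fun y : ℝ => 1 - y/3) (-(1/3)) y := by
      simpa using ((hasDerivAt_id y).div_const 3).const_sub 1
    have h3 : HasDerivAt (fun y : ℝ => Real.exp y - y - 1) (Real.exp y - 1) y := by
      simpa using ((Real.hasDerivAt_exp y).sub (hasDerivAt_id y)).sub_const 1
    have := h1.sub (h2.mul h3)
    exact this.congr_deriv (by ring)
  · intro y hy; linarith [hq y hy.le]

/-- Bennett/Bernstein-type bound for a finite weighted distribution on [0,1]. -/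
lemma bernstein_abs {K : ℕ} [NeZero K] (w x : Fin K → ℝ) (hw : ∀ k, 0 ≤ w k)
    (hw1 : ∑ k, w k = 1) (hx : ∀ k, x k ∈ Set.Icc (0:ℝ) 1) {η : ℝ} (hη : 0 < η) :
    η * (∑ k, w k * x k) + Real.log (∑ k, w k * Real.exp (-η * x k)) ≤
      (Real.exp η - η - 1) * (∑ k, w k * (x k - ∑ j, w j * x j)^2) := by
  set h : ℝ := ∑ k, w k * x k with hh
  have hh0 : 0 ≤ h := Finset.sum_nonneg fun k _ => mul_nonneg (hw k) (hx k).1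
  have hh1 : h ≤ 1 := by
    calc h ≤ ∑ k, w k * 1 := Finset.sum_le_sum fun k _ =>
            mul_le_mul_of_nonneg_left (hx k).2 (hw k)
    _ = 1 := by simp [hw1]
  set v : ℝ := ∑ k, w k * (x k - h)^2 with hv
  have hv0 : 0 ≤ v := Finset.sum_nonneg fun k _ => mul_nonneg (hw k) (sq_nonneg _)
  set φ : ℝ := Real.exp η - η - 1 with hφ
  have hφ0 : 0 ≤ φ := phi_nonneg η
  -- rewrite the sum
  have key : ∑ k, w k * Real.exp (-η * x k)
      = Real.exp (-η*h) * ∑ k, w k * Real.exp (η*(h - x k)) := by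
    rw [Finset.mul_sum]
    refine Finset.sum_congr rfl fun k _ => ?_
    rw [← mul_assoc, mul_comm (Real.exp (-η*h)) (w k), mul_assoc, ← Real.exp_add]
    ring_nf
  -- bound S
  have hS : ∑ k, w k * Real.exp (η*(h - x k)) ≤ 1 + φ * v := by
    have step : ∀ k, w k * Real.exp (η*(h - x k)) ≤
        w k + η*h*(w k) - η*(w k * x k) + φ*(w k*(x k - h)^2) := by
      intro k
      have hs : |h - x k| ≤ 1 := by
        rw [abs_le]; constructor <;> nlinarith [(hx k).1, (hx k).2]
      have hpm := phi_mul hs hη.le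
      rw [mul_comm (h - x k) η] at hpm
      have : Real.exp (η*(h - x k)) ≤ 1 + η*(h - x k) + (x k - h)^2 * φ := by nlinarith [hpm]
      nlinarith [mul_le_mul_of_nonneg_left this (hw k)]
    calc ∑ k, w k * Real.exp (η*(h - x k))
        ≤ ∑ k, (w k + η*h*(w k) - η*(w k * x k) + φ*(w k*(x k - h)^2)) :=
          Finset.sum_le_sum fun k _ => step k
    _ = 1 + φ * v := by
        simp only [Finset.sum_add_distrib, Finset.sum_sub_distrib, ← Finset.mul_sum]
        rw [hw1, ← hh, ← hv]; ring
  -- positivity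
  have hwk : ∃ k : Fin K, 0 < w k := by
    by_contra hc
    push_neg at hc
    have : (∑ k, w k) ≤ 0 := Finset.sum_nonpos fun k _ => hc k
    rw [hw1] at this; linarith
  obtain ⟨k0, hk0⟩ := hwk
  have hSpos : 0 < ∑ k, w k * Real.exp (η*(h - x k)) := by
    have h1 : 0 < w k0 * Real.exp (η*(h - x k0)) := mul_pos hk0 (Real.exp_pos _)
    refine lt_of_lt_of_le h1 (Finset.single_le_sum (f := fun k => w k * Real.exp (η*(h - x k)))
      (fun k _ => mul_nonneg (hw k) (Real.exp_pos _).le) (Finset.mem_univ k0))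
  have hlog : Real.log (∑ k, w k * Real.exp (-η * x k))
      = -η*h + Real.log (∑ k, w k * Real.exp (η*(h - x k))) := by
    rw [key, Real.log_mul (Real.exp_pos _).ne' hSpos.ne', Real.log_exp]
  rw [hlog]
  have hlog2 : Real.log (∑ k, w k * Real.exp (η*(h - x k))) ≤ φ * v := by
    calc Real.log (∑ k, w k * Real.exp (η*(h - x k))) ≤ Real.log (1 + φ*v) :=
          Real.log_le_log hSpos hS
    _ ≤ φ * v := by
        have := Real.log_le_sub_one_of_pos (show (0:ℝ) < 1 + φ*v by positivity)
        linarith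
  linarith

end Helpers
set_option linter.unusedSectionVars false
section Domain

variable {K : ℕ} [NeZero K] {ℓ : ℕ → Fin K → ℝ}

lemma finK_nonempty : Nonempty (Fin K) := ⟨⟨0, Nat.pos_of_ne_zero (NeZero.ne K)⟩⟩

lemma cumLoss_succ (ℓ : ℕ → Fin K → ℝ) (t : ℕ) (k : Fin K) :
    cumLoss ℓ (t+1) k = cumLoss ℓ t k + ℓ t k := Finset.sum_range_succ _ _

lemma bestLoss_le (L : Fin K → ℝ) (k : Fin K) : bestLoss L ≤ L k :=
  Finset.inf'_le _ (Finset.mem_univ k)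

lemma le_bestLoss {L : Fin K → ℝ} {c : ℝ} (h : ∀ k, c ≤ L k) : c ≤ bestLoss L :=
  Finset.le_inf' _ _ fun k _ => h k

lemma exists_bestLoss (L : Fin K → ℝ) : ∃ k, L k = bestLoss L := by
  obtain ⟨k, -, hk⟩ := Finset.exists_mem_eq_inf'
    (⟨⟨0, Nat.pos_of_ne_zero (NeZero.ne K)⟩, Finset.mem_univ _⟩ :
      (Finset.univ : Finset (Fin K)).Nonempty) L
  exact ⟨k, hk.symm⟩

lemma leaders_nonempty (L : Fin K → ℝ) : (leaders L).Nonempty := by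
  obtain ⟨k, hk⟩ := exists_bestLoss L
  exact ⟨k, Finset.mem_filter.mpr ⟨Finset.mem_univ _, hk⟩⟩

lemma cumLoss_nonneg (hℓ : ∀ t k, ℓ t k ∈ Set.Icc (0:ℝ) 1) (t : ℕ) (k : Fin K) :
    0 ≤ cumLoss ℓ t k := Finset.sum_nonneg fun s _ => (hℓ s k).1

lemma bestLoss_nonneg (hℓ : ∀ t k, ℓ t k ∈ Set.Icc (0:ℝ) 1) (t : ℕ) :
    0 ≤ bestLoss (cumLoss ℓ t) := le_bestLoss fun k => cumLoss_nonneg hℓ t k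

lemma bestLoss_zero : bestLoss (cumLoss ℓ 0) = 0 := by
  have h1 : ∀ k, cumLoss ℓ 0 k = 0 := fun k => Finset.sum_range_zero _
  refine le_antisymm ?_ (le_bestLoss fun k => (h1 k).ge)
  obtain ⟨k, hk⟩ := exists_bestLoss (cumLoss ℓ 0)
  rw [← hk, h1]

lemma bestLoss_le_T (hℓ : ∀ t k, ℓ t k ∈ Set.Icc (0:ℝ) 1) (T : ℕ) :
    bestLoss (cumLoss ℓ T) ≤ T := by
  have k0 : Fin K := ⟨0, Nat.pos_of_ne_zero (NeZero.ne K)⟩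
  refine le_trans (bestLoss_le _ k0) ?_
  calc cumLoss ℓ T k0 ≤ ∑ s ∈ Finset.range T, 1 :=
        Finset.sum_le_sum fun s _ => (hℓ s k0).2
  _ = T := by simp

lemma bestLoss_mono (hℓ : ∀ t k, ℓ t k ∈ Set.Icc (0:ℝ) 1) (t : ℕ) :
    bestLoss (cumLoss ℓ t) ≤ bestLoss (cumLoss ℓ (t+1)) :=
  le_bestLoss fun k => by
    rw [cumLoss_succ]
    linarith [bestLoss_le (cumLoss ℓ t) k, (hℓ t k).1]

lemma Zpos (η : ℝ) (t : ℕ) : 0 < ∑ j, Real.exp (-η * cumLoss ℓ t j) := by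
  haveI := (finK_nonempty (K := K))
  exact Finset.sum_pos (fun j _ => Real.exp_pos _) Finset.univ_nonempty

lemma wts_nonneg (ℓ : ℕ → Fin K → ℝ) (t : ℕ) (D : ℝ) (k : Fin K) : 0 ≤ wts ℓ t D k := by
  unfold wts
  split_ifs with h1 h2
  · positivity
  · exact le_refl _
  · exact div_nonneg (Real.exp_pos _).le (Zpos _ t).le

lemma wts_pos {t : ℕ} {D : ℝ} (hD : D ≠ 0) (k : Fin K) : 0 < wts ℓ t D k := by
  unfold wts
  rw [if_neg hD]
  exact div_pos (Real.exp_pos _) (Zpos _ t)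

lemma wts_sum (ℓ : ℕ → Fin K → ℝ) (t : ℕ) (D : ℝ) : ∑ k, wts ℓ t D k = 1 := by
  unfold wts
  split_ifs with h1
  · rw [Finset.sum_ite_mem, Finset.univ_inter, Finset.sum_const, nsmul_eq_mul]
    have hc : ((leaders (cumLoss ℓ t)).card : ℝ) ≠ 0 := by
      exact_mod_cast Finset.card_ne_zero_of_mem (leaders_nonempty _).choose_spec
    field_simp
  · rw [← Finset.sum_div, div_self (Zpos _ t).ne']

lemma hloss_nonneg (hℓ : ∀ t k, ℓ t k ∈ Set.Icc (0:ℝ) 1) (t : ℕ) (D : ℝ) :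
    0 ≤ hloss ℓ t D :=
  Finset.sum_nonneg fun k _ => mul_nonneg (wts_nonneg ℓ t D k) (hℓ t k).1

lemma hloss_le_one (hℓ : ∀ t k, ℓ t k ∈ Set.Icc (0:ℝ) 1) (t : ℕ) (D : ℝ) :
    hloss ℓ t D ≤ 1 := by
  calc hloss ℓ t D ≤ ∑ k, wts ℓ t D k * 1 :=
      Finset.sum_le_sum fun k _ => mul_le_mul_of_nonneg_left (hℓ t k).2 (wts_nonneg ℓ t D k)
  _ = 1 := by simp only [mul_one]; exact wts_sum ℓ t D

/-- cumulative mix loss, as a function of `D` (with `D = 0` meaning `η = ∞`). -/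
def MM (ℓ : ℕ → Fin K → ℝ) (D : ℝ) (t : ℕ) : ℝ :=
  if D = 0 then bestLoss (cumLoss ℓ t) else Mconst ℓ (Real.log K / D) t

lemma mloss_MM (t : ℕ) (D : ℝ) : mloss ℓ t D = MM ℓ D (t+1) - MM ℓ D t := by
  by_cases hD : D = 0 <;> simp [mloss, MM, hD]

lemma Kcast_pos : (0:ℝ) < (K:ℝ) := by
  exact_mod_cast Nat.pos_of_ne_zero (NeZero.ne K)

/-- the per-round mix loss at positive rate, in softmax form. -/
lemma mloss_eq {t : ℕ} {D : ℝ} (hD : D ≠ 0) :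
    mloss ℓ t D = -(1/(Real.log K / D)) *
      Real.log (∑ k, wts ℓ t D k * Real.exp (-(Real.log K / D) * ℓ t k)) := by
  set η := Real.log K / D with hη
  have hZ := Zpos (ℓ := ℓ) η t
  have hZ' := Zpos (ℓ := ℓ) η (t+1)
  have hfrac : ∑ k, wts ℓ t D k * Real.exp (-η * ℓ t k)
      = (∑ j, Real.exp (-η * cumLoss ℓ (t+1) j)) / (∑ j, Real.exp (-η * cumLoss ℓ t j)) := by
    rw [Finset.sum_div]
    refine Finset.sum_congr rfl fun k _ => ?_
    unfold wts
    rw [if_neg hD, div_mul_eq_mul_div, ← Real.exp_add, cumLoss_succ, mul_add]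
  rw [mloss, if_neg hD, hfrac, Mconst, Mconst,
    Real.log_div hZ'.ne' hZ.ne']
  have h1K : (0:ℝ) < 1/(K:ℝ) := by have := Kcast_pos (K := K); positivity
  rw [Real.log_mul h1K.ne' hZ'.ne', Real.log_mul h1K.ne' hZ.ne']
  ring

lemma logK_pos (hK : 2 ≤ K) : 0 < Real.log K := by
  apply Real.log_pos
  exact_mod_cast lt_of_lt_of_le one_lt_two (by exact_mod_cast hK)

lemma softmax_sum_pos {t : ℕ} {D : ℝ} (hD : D ≠ 0) :
    0 < ∑ k, wts ℓ t D k * Real.exp (-(Real.log K / D) * ℓ t k) := by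
  haveI := (finK_nonempty (K := K))
  exact Finset.sum_pos (fun k _ => mul_pos (wts_pos hD k) (Real.exp_pos _)) Finset.univ_nonempty

lemma mloss_nonneg (hℓ : ∀ t k, ℓ t k ∈ Set.Icc (0:ℝ) 1) (hK : 2 ≤ K)
    {t : ℕ} {D : ℝ} (hD : 0 ≤ D) : 0 ≤ mloss ℓ t D := by
  rcases eq_or_lt_of_le hD with h0 | h0
  · rw [← h0]
    unfold mloss
    rw [if_pos rfl]
    linarith [bestLoss_mono hℓ t]
  · have hη : 0 < Real.log K / D := div_pos (logK_pos hK) h0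
    rw [mloss_eq h0.ne']
    have hS1 : ∑ k, wts ℓ t D k * Real.exp (-(Real.log K / D) * ℓ t k) ≤ 1 := by
      calc ∑ k, wts ℓ t D k * Real.exp (-(Real.log K / D) * ℓ t k)
          ≤ ∑ k, wts ℓ t D k * 1 := Finset.sum_le_sum fun k _ =>
            mul_le_mul_of_nonneg_left
              (Real.exp_le_one_iff.mpr (by nlinarith [(hℓ t k).1])) (wts_nonneg ℓ t D k)
      _ = 1 := by simp only [mul_one]; exact wts_sum ℓ t D
    have hlog : Real.log (∑ k, wts ℓ t D k * Real.exp (-(Real.log K / D) * ℓ t k)) ≤ 0 := by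
      rw [← Real.log_one]
      exact Real.log_le_log (softmax_sum_pos h0.ne') hS1
    have : 0 < 1/(Real.log K / D) := by positivity
    nlinarith

lemma mixGap_nonneg (hℓ : ∀ t k, ℓ t k ∈ Set.Icc (0:ℝ) 1) (hK : 2 ≤ K)
    {t : ℕ} {D : ℝ} (hD : 0 ≤ D) : 0 ≤ mixGap ℓ t D := by
  rcases eq_or_lt_of_le hD with h0 | h0
  · -- FTL case
    rw [mixGap, mloss, if_pos (by linarith : D = 0)]
    rw [hloss]
    set m := bestLoss (cumLoss ℓ (t+1)) - bestLoss (cumLoss ℓ t) with hm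
    have key : ∀ k, wts ℓ t D k * m ≤ wts ℓ t D k * ℓ t k := by
      intro k
      rcases eq_or_lt_of_le (wts_nonneg ℓ t D k) with hw0 | hw0
      · rw [← hw0]; simp
      · refine mul_le_mul_of_nonneg_left ?_ (le_of_lt hw0)
        have hk : k ∈ leaders (cumLoss ℓ t) := by
          by_contra hc
          rw [wts, if_pos (by linarith : D = 0), if_neg hc] at hw0
          exact lt_irrefl 0 hw0
        have hlead : cumLoss ℓ t k = bestLoss (cumLoss ℓ t) :=
          (Finset.mem_filter.mp hk).2
        have h1 : bestLoss (cumLoss ℓ (t+1)) ≤ cumLoss ℓ t k + ℓ t k := by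
          rw [← cumLoss_succ]; exact bestLoss_le _ k
        rw [hm]; linarith [hlead ▸ h1]
    have : (∑ k, wts ℓ t D k) * m ≤ ∑ k, wts ℓ t D k * ℓ t k := by
      rw [Finset.sum_mul]
      exact Finset.sum_le_sum fun k _ => key k
    rw [wts_sum, one_mul] at this
    linarith
  · -- Jensen
    have hη : 0 < Real.log K / D := div_pos (logK_pos hK) h0
    rw [mixGap, mloss_eq h0.ne']
    set η := Real.log K / D with hηd
    set S := ∑ k, wts ℓ t D k * Real.exp (-η * ℓ t k) with hSd
    have hjensen : Real.exp (-η * hloss ℓ t D) ≤ S := by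
      have h := ConvexOn.map_sum_le (t := Finset.univ) (w := wts ℓ t D)
        (p := fun k => -η * ℓ t k) convexOn_exp
        (fun k _ => wts_nonneg ℓ t D k) (wts_sum ℓ t D) (fun k _ => Set.mem_univ _)
      have harg : ∑ k, wts ℓ t D k • (-η * ℓ t k) = -η * hloss ℓ t D := by
        simp only [smul_eq_mul, hloss, Finset.mul_sum]
        exact Finset.sum_congr rfl fun k _ => by ring
      rw [harg] at h
      have h2 : ∑ k, wts ℓ t D k • Real.exp (-η * ℓ t k) = S := by
        simp only [smul_eq_mul, hSd]
      rw [h2] at h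
      exact h
    have hSpos : 0 < S := softmax_sum_pos h0.ne'
    have hlog : -η * hloss ℓ t D ≤ Real.log S :=
      (Real.le_log_iff_exp_le hSpos).mpr hjensen
    have hinv : 0 < 1/η := by positivity
    have h2 := mul_le_mul_of_nonneg_left hlog hinv.le
    have hne : η ≠ 0 := ne_of_gt hη
    have h3 : (1/η) * (-η * hloss ℓ t D) = -hloss ℓ t D := by
      rw [neg_mul, mul_neg, ← mul_assoc, one_div, inv_mul_cancel₀ hne, one_mul]
    rw [h3] at h2
    linarith

lemma mixGap_le_one (hℓ : ∀ t k, ℓ t k ∈ Set.Icc (0:ℝ) 1) (hK : 2 ≤ K)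
    {t : ℕ} {D : ℝ} (hD : 0 ≤ D) : mixGap ℓ t D ≤ 1 := by
  have := mloss_nonneg hℓ hK (t := t) hD
  have := hloss_le_one hℓ t D
  rw [mixGap]; linarith

lemma one_div_mul_neg {η a : ℝ} (hη : η ≠ 0) : (1/η) * (-η * a) = -a := by
  rw [neg_mul, mul_neg, ← mul_assoc, one_div, inv_mul_cancel₀ hη, one_mul]

lemma Apos (η : ℝ) (t : ℕ) :
    0 < (1/(K:ℝ)) * ∑ k, Real.exp (-η * cumLoss ℓ t k) := by
  have h1 := Kcast_pos (K := K)
  have h2 := Zpos (ℓ := ℓ) η t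
  positivity

lemma best_le_Mconst {η : ℝ} (hη : 0 < η) (t : ℕ) :
    bestLoss (cumLoss ℓ t) ≤ Mconst ℓ η t := by
  set B := bestLoss (cumLoss ℓ t) with hB
  have hsum : (1/(K:ℝ)) * ∑ k, Real.exp (-η * cumLoss ℓ t k) ≤ Real.exp (-η * B) := by
    have hterm : ∀ k, Real.exp (-η * cumLoss ℓ t k) ≤ Real.exp (-η * B) := fun k =>
      Real.exp_le_exp.mpr (by nlinarith [bestLoss_le (cumLoss ℓ t) k])
    have hKpos := Kcast_pos (K := K)
    calc (1/(K:ℝ)) * ∑ k, Real.exp (-η * cumLoss ℓ t k)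
        ≤ (1/(K:ℝ)) * ∑ _k : Fin K, Real.exp (-η * B) :=
          mul_le_mul_of_nonneg_left (Finset.sum_le_sum fun k _ => hterm k) (by positivity)
    _ = Real.exp (-η * B) := by
        rw [Finset.sum_const, Finset.card_univ, Fintype.card_fin, nsmul_eq_mul]
        field_simp
  have hlog := Real.log_le_log (Apos η t) hsum
  rw [Real.log_exp] at hlog
  have hinv : (0:ℝ) < 1/η := by positivity
  have h2 := mul_le_mul_of_nonneg_left hlog hinv.le
  rw [one_div_mul_neg (ne_of_gt hη)] at h2
  rw [Mconst]
  linarith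

lemma Mconst_le_best_add (hK : 2 ≤ K) {η : ℝ} (hη : 0 < η) (t : ℕ) :
    Mconst ℓ η t ≤ bestLoss (cumLoss ℓ t) + Real.log K / η := by
  set B := bestLoss (cumLoss ℓ t) with hB
  obtain ⟨k0, hk0⟩ := exists_bestLoss (cumLoss ℓ t)
  have hsum : Real.exp (-η * B) ≤ ∑ k, Real.exp (-η * cumLoss ℓ t k) := by
    rw [hB, ← hk0]
    exact Finset.single_le_sum (f := fun k => Real.exp (-η * cumLoss ℓ t k))
      (fun k _ => (Real.exp_pos _).le) (Finset.mem_univ k0)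
  have hKpos := Kcast_pos (K := K)
  have hsum2 : (1/(K:ℝ)) * Real.exp (-η * B) ≤
      (1/(K:ℝ)) * ∑ k, Real.exp (-η * cumLoss ℓ t k) :=
    mul_le_mul_of_nonneg_left hsum (by positivity)
  have hlog := Real.log_le_log (by positivity) hsum2
  rw [Real.log_mul (by positivity : (1/(K:ℝ)) ≠ 0) (Real.exp_pos _).ne', Real.log_exp,
    one_div, Real.log_inv] at hlog
  have hinv : (0:ℝ) < 1/η := by positivity
  have h2 := mul_le_mul_of_nonneg_left hlog hinv.le
  have h3 : (1/η) * (-Real.log K + -η * B) = -(Real.log K / η) - B := by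
    rw [mul_add, one_div_mul_neg (ne_of_gt hη)]
    ring
  rw [h3] at h2
  rw [Mconst, one_div (K:ℝ)]
  linarith

lemma Mconst_mono (hK : 2 ≤ K) {η' η : ℝ} (h1 : 0 < η') (h2 : η' ≤ η) (t : ℕ) :
    Mconst ℓ η t ≤ Mconst ℓ η' t := by
  have hη : 0 < η := lt_of_lt_of_le h1 h2
  set p := η / η' with hp
  have hp1 : 1 ≤ p := (one_le_div h1).mpr h2
  have hppos : 0 < p := lt_of_lt_of_le one_pos hp1
  have hKpos := Kcast_pos (K := K)
  have hmean := Real.arith_mean_le_rpow_mean Finset.univ (fun _ => 1/(K:ℝ))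
    (fun k => Real.exp (-η' * cumLoss ℓ t k)) (fun k _ => by positivity)
    (by rw [Finset.sum_const, Finset.card_univ, Fintype.card_fin, nsmul_eq_mul]; field_simp)
    (fun k _ => (Real.exp_pos _).le) hp1
  have hzp : ∀ k : Fin K, (Real.exp (-η' * cumLoss ℓ t k)) ^ p
      = Real.exp (-η * cumLoss ℓ t k) := by
    intro k
    rw [← Real.exp_mul]
    congr 1
    field_simp [hp]
    rw [hp]; field_simp
  simp only [hzp] at hmean
  rw [← Finset.mul_sum, ← Finset.mul_sum] at hmean
  set A := (1/(K:ℝ)) * ∑ k, Real.exp (-η * cumLoss ℓ t k) with hA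
  set B := (1/(K:ℝ)) * ∑ k, Real.exp (-η' * cumLoss ℓ t k) with hBd
  have hApos : 0 < A := Apos η t
  have hBpos : 0 < B := Apos η' t
  have hlog : Real.log B ≤ (1/p) * Real.log A := by
    calc Real.log B ≤ Real.log (A ^ (1/p)) := Real.log_le_log hBpos hmean
    _ = (1/p) * Real.log A := Real.log_rpow hApos _
  have hinv : (0:ℝ) < 1/η' := by positivity
  have h3 := mul_le_mul_of_nonneg_left hlog hinv.le
  have h4 : (1/η') * ((1/p) * Real.log A) = (1/η) * Real.log A := by
    rw [hp]
    field_simp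
  rw [h4] at h3
  rw [Mconst, Mconst, ← hA, ← hBd]
  linarith

lemma MM_mono (hK : 2 ≤ K) {D D' : ℝ} (h0 : 0 ≤ D) (h : D ≤ D') (t : ℕ) :
    MM ℓ D t ≤ MM ℓ D' t := by
  rcases eq_or_lt_of_le h0 with hD0 | hD0
  · rcases eq_or_lt_of_le (hD0 ▸ h : (0:ℝ) ≤ D') with hD'0 | hD'0
    · rw [← hD0, ← hD'0]
    · unfold MM
      rw [if_pos hD0.symm, if_neg (ne_of_gt hD'0)]
      exact best_le_Mconst (div_pos (logK_pos hK) hD'0) t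
  · have hD'pos : 0 < D' := lt_of_lt_of_le hD0 h
    unfold MM
    rw [if_neg (ne_of_gt hD0), if_neg (ne_of_gt hD'pos)]
    exact Mconst_mono hK (div_pos (logK_pos hK) hD'pos)
      (div_le_div_of_nonneg_left (logK_pos hK).le hD0 h) t

lemma ahDelta_nonneg (hℓ : ∀ t k, ℓ t k ∈ Set.Icc (0:ℝ) 1) (hK : 2 ≤ K) (t : ℕ) :
    0 ≤ ahDelta ℓ t := by
  induction t with
  | zero => exact le_refl 0
  | succ t ih =>
    have := mixGap_nonneg hℓ hK (t := t) ih
    show 0 ≤ ahDelta ℓ t + mixGap ℓ t (ahDelta ℓ t)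
    linarith

lemma ahDelta_le_succ (hℓ : ∀ t k, ℓ t k ∈ Set.Icc (0:ℝ) 1) (hK : 2 ≤ K) (t : ℕ) :
    ahDelta ℓ t ≤ ahDelta ℓ (t+1) := by
  have := mixGap_nonneg hℓ hK (t := t) (ahDelta_nonneg hℓ hK t)
  show ahDelta ℓ t ≤ ahDelta ℓ t + mixGap ℓ t (ahDelta ℓ t)
  linarith

lemma ahDelta_eq_sum (T : ℕ) :
    ahDelta ℓ T = ∑ t ∈ Finset.range T, mixGap ℓ t (ahDelta ℓ t) := by
  induction T with
  | zero => simp [ahDelta]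
  | succ T ih =>
    rw [Finset.sum_range_succ, ← ih]
    rfl

lemma sum_mloss_le (hℓ : ∀ t k, ℓ t k ∈ Set.Icc (0:ℝ) 1) (hK : 2 ≤ K) (T : ℕ) :
    ∑ t ∈ Finset.range T, mloss ℓ t (ahDelta ℓ t) ≤ MM ℓ (ahDelta ℓ T) T := by
  induction T with
  | zero =>
    rw [Finset.sum_range_zero]
    have h0 : ahDelta ℓ 0 = 0 := rfl
    rw [h0]
    unfold MM
    rw [if_pos rfl, bestLoss_zero]
  | succ T ih =>
    rw [Finset.sum_range_succ]
    have h1 := mloss_MM (ℓ := ℓ) T (ahDelta ℓ T)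
    have h2 : MM ℓ (ahDelta ℓ T) (T+1) ≤ MM ℓ (ahDelta ℓ (T+1)) (T+1) :=
      MM_mono hK (ahDelta_nonneg hℓ hK T) (ahDelta_le_succ hℓ hK T) (T+1)
    linarith

lemma H_le (hℓ : ∀ t k, ℓ t k ∈ Set.Icc (0:ℝ) 1) (hK : 2 ≤ K) (T : ℕ) :
    ∑ t ∈ Finset.range T, hloss ℓ t (ahDelta ℓ t) ≤
      bestLoss (cumLoss ℓ T) + 2 * ahDelta ℓ T := by
  have hsplit : ∑ t ∈ Finset.range T, hloss ℓ t (ahDelta ℓ t)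
      = ahDelta ℓ T + ∑ t ∈ Finset.range T, mloss ℓ t (ahDelta ℓ t) := by
    have hh : ∀ t, hloss ℓ t (ahDelta ℓ t)
        = mixGap ℓ t (ahDelta ℓ t) + mloss ℓ t (ahDelta ℓ t) := fun t => by
      rw [mixGap]; ring
    rw [Finset.sum_congr rfl fun t _ => hh t, Finset.sum_add_distrib, ← ahDelta_eq_sum]
  have h1 := sum_mloss_le hℓ hK T
  have h2 : MM ℓ (ahDelta ℓ T) T ≤ bestLoss (cumLoss ℓ T) + ahDelta ℓ T := by
    rcases eq_or_lt_of_le (ahDelta_nonneg hℓ hK T) with h0 | h0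
    · unfold MM
      rw [if_pos h0.symm]
      linarith [h0.symm.le]
    · unfold MM
      rw [if_neg (ne_of_gt h0)]
      have hM := Mconst_le_best_add (ℓ := ℓ) hK (div_pos (logK_pos hK) h0) T
      have hc : Real.log K / (Real.log K / ahDelta ℓ T) = ahDelta ℓ T := by
        rw [div_div_eq_mul_div, mul_comm, mul_div_assoc,
          div_self (ne_of_gt (logK_pos hK)), mul_one]
      rw [hc] at hM
      exact hM
  linarith

lemma vvar_nonneg (t : ℕ) (D : ℝ) : 0 ≤ vvar ℓ t D :=
  Finset.sum_nonneg fun k _ => mul_nonneg (wts_nonneg ℓ t D k) (sq_nonneg _)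

lemma vvar_le (hℓ : ∀ t k, ℓ t k ∈ Set.Icc (0:ℝ) 1) (t : ℕ) (D : ℝ) :
    vvar ℓ t D ≤ hloss ℓ t D * (1 - hloss ℓ t D) := by
  set h := hloss ℓ t D with hh
  have hsum : ∑ k, wts ℓ t D k * ℓ t k = h := rfl
  have expand : vvar ℓ t D = (∑ k, wts ℓ t D k * (ℓ t k)^2) - h^2 := by
    unfold vvar
    have e : ∀ k : Fin K, wts ℓ t D k * (ℓ t k - h)^2
        = wts ℓ t D k * (ℓ t k)^2 - 2*h*(wts ℓ t D k * ℓ t k) + h^2 * wts ℓ t D k :=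
      fun k => by ring
    rw [Finset.sum_congr rfl fun k _ => e k, Finset.sum_add_distrib, Finset.sum_sub_distrib,
      ← Finset.mul_sum, ← Finset.mul_sum, wts_sum, hsum]
    ring
  have hle : (∑ k, wts ℓ t D k * (ℓ t k)^2) ≤ h := by
    rw [← hsum]
    refine Finset.sum_le_sum fun k _ => ?_
    have h1 := (hℓ t k).1
    have h2 := (hℓ t k).2
    have h3 : 0 ≤ ℓ t k - (ℓ t k)^2 := by nlinarith
    nlinarith [mul_nonneg (wts_nonneg ℓ t D k) h3]
  rw [expand]
  nlinarith [hle]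

lemma key_round (hℓ : ∀ t k, ℓ t k ∈ Set.Icc (0:ℝ) 1) (hK : 2 ≤ K) (t : ℕ)
    {D : ℝ} (hD : 0 ≤ D) :
    mixGap ℓ t D * D ≤ (vvar ℓ t D / 2 + mixGap ℓ t D / 3) * Real.log K := by
  have hlogK := logK_pos hK
  have hδ := mixGap_nonneg hℓ hK (t := t) hD
  have hv := vvar_nonneg (ℓ := ℓ) t D
  rcases eq_or_lt_of_le hD with h0 | h0
  · subst h0
    rw [mul_zero]
    have := mul_nonneg (show (0:ℝ) ≤ vvar ℓ t 0 / 2 + mixGap ℓ t 0 / 3 by linarith) hlogK.le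
    linarith
  · have hηpos : 0 < Real.log K / D := div_pos hlogK h0
    have hb := bernstein_abs (wts ℓ t D) (ℓ t) (wts_nonneg ℓ t D) (wts_sum ℓ t D)
      (fun k => hℓ t k) hηpos
    have hvrfl : (∑ k, wts ℓ t D k * (ℓ t k - ∑ j, wts ℓ t D j * ℓ t j)^2) = vvar ℓ t D := rfl
    have hhrfl : (∑ k, wts ℓ t D k * ℓ t k) = hloss ℓ t D := rfl
    rw [hvrfl, hhrfl] at hb
    have hm : Real.log (∑ k, wts ℓ t D k * Real.exp (-(Real.log K / D) * ℓ t k))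
        = -(Real.log K / D) * mloss ℓ t D := by
      rw [mloss_eq (ne_of_gt h0)]
      field_simp
    rw [hm] at hb
    set η := Real.log (K:ℝ) / D with hηd
    have hδη : η * mixGap ℓ t D ≤ (Real.exp η - η - 1) * vvar ℓ t D := by
      have e : η * mixGap ℓ t D = η * hloss ℓ t D + -η * mloss ℓ t D := by
        rw [mixGap]; ring
      linarith [hb, e.le, e.ge]
    have hlogKD : η * D = Real.log K := div_mul_cancel₀ _ (ne_of_gt h0)
    rw [← hlogKD]
    rcases le_or_gt 3 η with hcase | hcase
    · nlinarith [mul_nonneg (mul_nonneg hv hηpos.le) h0.le,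
        mul_nonneg (mul_nonneg (show (0:ℝ) ≤ η - 3 by linarith) hδ) h0.le]
    · have h8 : (1 - η/3) * (η * mixGap ℓ t D)
          ≤ (η^2/2) * vvar ℓ t D := by
        have h5 := mul_le_mul_of_nonneg_left hδη (show (0:ℝ) ≤ 1 - η/3 by linarith)
        have h6 : (1 - η/3) * ((Real.exp η - η - 1) * vvar ℓ t D) ≤ (η^2/2) * vvar ℓ t D := by
          have := mul_le_mul_of_nonneg_right (eta_ineq hηpos.le) hv
          nlinarith [this]
        linarith
      have h9 := mul_le_mul_of_nonneg_right h8 h0.le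
      nlinarith [h9, hηpos, h0]

lemma DeltaSq (hℓ : ∀ t k, ℓ t k ∈ Set.Icc (0:ℝ) 1) (hK : 2 ≤ K) (T : ℕ) :
    (ahDelta ℓ T)^2 ≤ (∑ t ∈ Finset.range T, vvar ℓ t (ahDelta ℓ t)) * Real.log K
      + (1 + (2/3)*Real.log K) * ahDelta ℓ T := by
  have hlogK := logK_pos hK
  induction T with
  | zero => simp [ahDelta]
  | succ T ih =>
    have hD := ahDelta_nonneg hℓ hK T
    have hδ := mixGap_nonneg hℓ hK (t := T) hD
    have hδ1 := mixGap_le_one hℓ hK (t := T) hD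
    have hv := vvar_nonneg (ℓ := ℓ) T (ahDelta ℓ T)
    have hkey := key_round hℓ hK T hD
    have hstep : ahDelta ℓ (T+1) = ahDelta ℓ T + mixGap ℓ T (ahDelta ℓ T) := rfl
    rw [hstep, Finset.sum_range_succ]
    nlinarith [mul_nonneg hδ (show (0:ℝ) ≤ 1 - mixGap ℓ T (ahDelta ℓ T) by linarith)]

lemma sum_vvar_le (hℓ : ∀ t k, ℓ t k ∈ Set.Icc (0:ℝ) 1) (T : ℕ) :
    (∑ t ∈ Finset.range T, vvar ℓ t (ahDelta ℓ t)) * T ≤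
      (∑ t ∈ Finset.range T, hloss ℓ t (ahDelta ℓ t)) *
        ((T:ℝ) - ∑ t ∈ Finset.range T, hloss ℓ t (ahDelta ℓ t)) := by
  set H := ∑ t ∈ Finset.range T, hloss ℓ t (ahDelta ℓ t) with hH
  set Q := ∑ t ∈ Finset.range T, (hloss ℓ t (ahDelta ℓ t))^2 with hQ
  have h1 : (∑ t ∈ Finset.range T, vvar ℓ t (ahDelta ℓ t)) ≤ H - Q := by
    calc (∑ t ∈ Finset.range T, vvar ℓ t (ahDelta ℓ t))
        ≤ ∑ t ∈ Finset.range T, (hloss ℓ t (ahDelta ℓ t) - (hloss ℓ t (ahDelta ℓ t))^2) := by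
          refine Finset.sum_le_sum fun t _ => ?_
          have := vvar_le hℓ t (ahDelta ℓ t)
          nlinarith [this]
    _ = H - Q := by rw [Finset.sum_sub_distrib]
  have h2 : H^2 ≤ (T:ℝ) * Q := by
    have := Finset.sum_mul_sq_le_sq_mul_sq (Finset.range T) (fun _ => (1:ℝ))
      (fun t => hloss ℓ t (ahDelta ℓ t))
    simpa [hH, hQ] using this
  have hT0 : (0:ℝ) ≤ T := Nat.cast_nonneg T
  nlinarith [mul_le_mul_of_nonneg_right h1 hT0]
end Domain
/-- AdaHedge main regret bound: for losses in `[0,1]^K`,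
`R_T ≤ 2·√(L*_T·(T - L*_T)/T · ln K) + (16/3)·ln K + 2`. -/
theorem adahedge_main_regret_bound (K : ℕ) [NeZero K] (hK : 2 ≤ K)
    (T : ℕ) (hT : 1 ≤ T)
    (ℓ : ℕ → Fin K → ℝ) (hℓ : ∀ t k, ℓ t k ∈ Set.Icc (0 : ℝ) 1) :
    (∑ t ∈ Finset.range T, hloss ℓ t (ahDelta ℓ t)) - bestLoss (cumLoss ℓ T) ≤
      2 * Real.sqrt (bestLoss (cumLoss ℓ T) * ((T : ℝ) - bestLoss (cumLoss ℓ T)) / (T : ℝ)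
          * Real.log K)
        + (16/3) * Real.log K + 2 := by
  have hlogK := logK_pos (K := K) hK
  set L := bestLoss (cumLoss ℓ T) with hLd
  set H := ∑ t ∈ Finset.range T, hloss ℓ t (ahDelta ℓ t) with hHd
  set Δ := ahDelta ℓ T with hΔd
  have hTpos : (0:ℝ) < T := by exact_mod_cast hT
  have hL0 : 0 ≤ L := bestLoss_nonneg hℓ T
  have hLT : L ≤ T := bestLoss_le_T hℓ T
  have hΔ0 : 0 ≤ Δ := ahDelta_nonneg hℓ hK T
  have hreg : H ≤ L + 2*Δ := H_le hℓ hK T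
  set S := L * ((T:ℝ) - L) / (T:ℝ) with hSd
  have hS0 : 0 ≤ S := div_nonneg (mul_nonneg hL0 (by linarith)) hTpos.le
  have hsqrt0 : 0 ≤ Real.sqrt (S * Real.log K) := Real.sqrt_nonneg _
  rcases le_or_gt (H - L) 0 with hR | hR
  · linarith
  · have hV := sum_vvar_le hℓ T
    set V := ∑ t ∈ Finset.range T, vvar ℓ t (ahDelta ℓ t) with hVd
    have hH0 : 0 ≤ H := Finset.sum_nonneg fun t _ => hloss_nonneg hℓ t _
    have hVS : V ≤ S + 2*Δ := by
      have h2 : H*((T:ℝ)-H) ≤ L*((T:ℝ)-L) + (H-L)*(T:ℝ) := by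
        nlinarith [mul_nonneg (le_of_lt hR) (show (0:ℝ) ≤ H + L by linarith)]
      have hST : S * (T:ℝ) = L*((T:ℝ)-L) := by
        rw [hSd]
        field_simp
      have h3 : V*(T:ℝ) ≤ (S + 2*Δ)*(T:ℝ) := by
        nlinarith [hV, h2, hST,
          mul_le_mul_of_nonneg_right (show H - L ≤ 2*Δ by linarith) hTpos.le]
      exact le_of_mul_le_mul_right h3 hTpos
    have hQuad := DeltaSq hℓ hK T
    have hQ2 : Δ^2 ≤ S*Real.log K + (1 + (8/3)*Real.log K)*Δ := by
      nlinarith [mul_le_mul_of_nonneg_right hVS hlogK.le, hQuad]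
    have hsq : (Real.sqrt (S*Real.log K))^2 = S*Real.log K :=
      Real.sq_sqrt (by positivity)
    have hb : (0:ℝ) < 1 + (8/3)*Real.log K := by linarith
    have hsum0 : 0 ≤ Δ + Real.sqrt (S*Real.log K) := by linarith
    have hΔle : Δ ≤ Real.sqrt (S*Real.log K) + (1 + (8/3)*Real.log K) := by
      nlinarith [hQ2, hsq, hb, hsum0, mul_nonneg hb.le hsqrt0]
    linarith

end
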